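/- If additionally E‖v₁‖³ < ∞, then the third absolute moment of the mean-corrected averaged step decays at rate k^{-3/2}: there exists a constant C (depending only on c and the moments of v₁) such that for all k ≥ 1, E‖ε_k‖³ ≤ C · k^{-3/2}. -/

import Mathlib

open MeasureTheory ProbabilityTheory
open scoped RealInnerProductSpace ENNReal NNReal

lemma scalar_cube (a b t s : ℝ) (ha : 0 ≤ a) (hb : 0 ≤ b) (ht : -(a*b) ≤ t) (ht' : t ≤ a*b)
    (hs : 0 ≤ s) (hs2 : s^2 = a^2 + 2*t + b^2) :
    s^3 ≤ a^3 + 3*a*t + 3*a*b^2 + 3*b^3 := by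
  have hsab : s ≤ a + b := by nlinarith [sq_nonneg (s - (a+b))]
  have has : a^2 + t ≤ a * s := by
    nlinarith [mul_nonneg ha hs, sq_nonneg (a*b - t), sq_nonneg (a*b + t),
      sq_nonneg (a*s - (a^2+t)), sq_nonneg (a*s + (a^2+t))]
  have hsa : (s-a)^2 ≤ b^2 := by nlinarith
  have hkey : (s-a)^2 * (2*s+a) ≤ b^2 * (3*a + 2*b) := by
    have h1 : 2*s + a ≤ 3*a + 2*b := by linarith
    exact mul_le_mul hsa h1 (by linarith) (by positivity)
  nlinarith [hkey]

lemma norm_add_cube {E : Type*} [NormedAddCommGroup E] [InnerProductSpace ℝ E] (x y : E) :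
    ‖x + y‖^3 ≤ ‖x‖^3 + 3*‖x‖*⟪x,y⟫ + 3*‖x‖*‖y‖^2 + 3*‖y‖^3 := by
  have habs := abs_real_inner_le_norm x y
  have h2 : ‖x+y‖^2 = ‖x‖^2 + 2*⟪x,y⟫ + ‖y‖^2 := by
    rw [@norm_add_sq_real]
  have := scalar_cube ‖x‖ ‖y‖ ⟪x,y⟫ ‖x+y‖ (norm_nonneg _) (norm_nonneg _)
    (by have := neg_abs_le (⟪x,y⟫); linarith) (le_of_abs_le habs) (norm_nonneg _) h2
  linarith

/-- Memℒp at 3 gives integrability of the cubed norm. -/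
lemma integrable_norm_cube {Ω : Type*} [MeasurableSpace Ω] {P : Measure Ω}
    {E : Type*} [NormedAddCommGroup E] {f : Ω → E} (hf : MemLp f 3 P) :
    Integrable (fun ω => ‖f ω‖^3) P := by
  have := hf.integrable_norm_rpow (by norm_num) (by norm_num)
  have h3 : ((3:ℝ≥0∞)).toReal = (3:ℝ) := by norm_num
  rw [h3] at this
  convert this using 2 with ω
  rw [← Real.rpow_natCast]
  norm_num

/-- Key factorization: `E[φ(S) ⟪S, X⟫] = 0` when `S, X` independent and `E X = 0`. -/
lemma integral_weighted_inner_eq_zero {Ω : Type*} [MeasurableSpace Ω] (P : Measure Ω)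
    [IsProbabilityMeasure P] {d : ℕ}
    {S X : Ω → EuclideanSpace ℝ (Fin d)} (hX : Measurable X)
    (hind : IndepFun S X P) {φ : EuclideanSpace ℝ (Fin d) → ℝ} (hφ : Measurable φ)
    (hint : Integrable (fun ω => φ (S ω) • S ω) P)
    (hXint : Integrable X P) (hX0 : (∫ ω, X ω ∂P) = 0) :
    (∫ ω, φ (S ω) * ⟪S ω, X ω⟫ ∂P) = 0 := by
  have hcoord : ∀ l : Fin d, (∫ ω, X ω l ∂P) = 0 := by
    intro l
    have := (EuclideanSpace.proj (𝕜 := ℝ) l).integral_comp_comm hXint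
    simpa [hX0] using this
  have hinner : ∀ ω, ⟪S ω, X ω⟫ = ∑ l : Fin d, S ω l * X ω l := by
    intro ω
    simp [PiLp.inner_apply, RCLike.inner_apply, mul_comm]
  have hintl : ∀ l : Fin d, Integrable (fun ω => φ (S ω) * S ω l) P := by
    intro l
    have := (EuclideanSpace.proj (𝕜 := ℝ) l).integrable_comp hint
    simpa using this
  calc (∫ ω, φ (S ω) * ⟪S ω, X ω⟫ ∂P)
      = ∫ ω, ∑ l : Fin d, (φ (S ω) * S ω l) * X ω l ∂P := by
        congr 1; funext ω; rw [hinner]; rw [Finset.mul_sum]; congr 1; funext l; ring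
    _ = ∑ l : Fin d, ∫ ω, (φ (S ω) * S ω l) * X ω l ∂P := by
        refine integral_finset_sum _ (fun l _ => ?_)
        refine IndepFun.integrable_mul ?_ (hintl l) ((EuclideanSpace.proj (𝕜 := ℝ) l).integrable_comp hXint)
        exact hind.comp (hφ.mul (EuclideanSpace.proj (𝕜 := ℝ) l).continuous.measurable) (EuclideanSpace.proj (𝕜 := ℝ) l).continuous.measurable
    _ = ∑ l : Fin d, (∫ ω, φ (S ω) * S ω l ∂P) * (∫ ω, X ω l ∂P) := by
        refine Finset.sum_congr rfl (fun l _ => ?_)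
        refine IndepFun.integral_fun_mul_eq_mul_integral ?_ ((hintl l).aestronglyMeasurable)
          (((EuclideanSpace.proj (𝕜 := ℝ) l).integrable_comp hXint).aestronglyMeasurable)
        exact hind.comp (hφ.mul (EuclideanSpace.proj (𝕜 := ℝ) l).continuous.measurable) (EuclideanSpace.proj (𝕜 := ℝ) l).continuous.measurable
    _ = 0 := by simp [hcoord]


/-- The mean-corrected averaged step `ε_k := (c/k) • ∑_{i<k} (vᵢ - μ)`. -/
noncomputable def eps {Ω : Type*} [MeasurableSpace Ω] {d : ℕ}
    (c : ℝ) (v : ℕ → Ω → EuclideanSpace ℝ (Fin d)) (μ : EuclideanSpace ℝ (Fin d))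
    (k : ℕ) (ω : Ω) : EuclideanSpace ℝ (Fin d) :=
  (c / k) • ∑ i ∈ Finset.range k, (v i ω - μ)

set_option maxHeartbeats 1000000 in
/-- If `E‖v₁‖³ < ∞`, then there is a constant `C` with
`E‖ε_k‖³ ≤ C · k^{-3/2}` for all `k ≥ 1`. -/
theorem meanCorrectedStep_third_moment
    {Ω : Type*} [MeasurableSpace Ω] (P : Measure Ω) [IsProbabilityMeasure P]
    {d : ℕ} (v : ℕ → Ω → EuclideanSpace ℝ (Fin d))
    (hmeas : ∀ i, Measurable (v i))
    (hindep : iIndepFun v P)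
    (hident : ∀ i, IdentDistrib (v i) (v 0) P P)
    (μ : EuclideanSpace ℝ (Fin d)) (S : Matrix (Fin d) (Fin d) ℝ)
    (hmean : (∫ ω, v 0 ω ∂P) = μ)
    (hcov : ∀ i j, (∫ ω, (v 0 ω i - μ i) * (v 0 ω j - μ j) ∂P) = S i j)
    (hL3 : Integrable (fun ω => ‖v 0 ω‖ ^ 3) P)
    (c : ℝ) (hc : 0 < c) :
    ∃ C : ℝ, ∀ k : ℕ, 1 ≤ k →
      (∫ ω, ‖eps c v μ k ω‖ ^ 3 ∂P) ≤ C * (k : ℝ) ^ (-(3 / 2) : ℝ) := by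
  classical
  -- centered variables
  set X : ℕ → Ω → EuclideanSpace ℝ (Fin d) := fun i ω => v i ω - μ with hXdef
  have hXmeas : ∀ i, Measurable (X i) := fun i => (hmeas i).sub measurable_const
  have hXindep : iIndepFun X P :=
    hindep.comp (fun _ x => x - μ) (fun _ => measurable_id.sub measurable_const)
  have hXid : ∀ i, IdentDistrib (X i) (X 0) P P :=
    fun i => (hident i).comp (measurable_id.sub measurable_const)
  -- Memℒp 3 of v 0 and of the Xᵢ
  have hv0L3 : MemLp (v 0) 3 P := by
    have h1 : MemLp (fun ω => ‖v 0 ω‖ ^ ((3:ℝ≥0∞)).toReal) ((3:ℝ≥0∞)/(3:ℝ≥0∞)) P := by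
      rw [ENNReal.div_self (by norm_num) (by norm_num), memLp_one_iff_integrable]
      have h3 : ((3:ℝ≥0∞)).toReal = (3:ℝ) := by norm_num
      rw [h3]
      convert hL3 using 2 with ω
      rw [← Real.rpow_natCast]
      norm_num
    exact (memLp_norm_rpow_iff (hmeas 0).aestronglyMeasurable (by norm_num) (by norm_num)).1 h1
  have hXL3 : ∀ i, MemLp (X i) 3 P :=
    fun i => (hXid i).symm.memLp_snd (hv0L3.sub (memLp_const μ))
  have hXint : ∀ i, Integrable (X i) P := fun i => (hXL3 i).integrable (by norm_num)
  have hX1 : ∀ i, Integrable (fun ω => ‖X i ω‖) P := fun i => (hXint i).norm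
  have hX2 : ∀ i, Integrable (fun ω => ‖X i ω‖^2) P :=
    fun i => ((hXL3 i).mono_exponent (by norm_num)).norm.integrable_sq
  have hX3 : ∀ i, Integrable (fun ω => ‖X i ω‖^3) P := fun i => integrable_norm_cube (hXL3 i)
  -- zero mean
  have hvint : ∀ i, Integrable (v i) P := by
    intro i
    have h : Integrable (fun ω => X i ω + μ) P := (hXint i).add (integrable_const μ)
    have he : (fun ω => X i ω + μ) = v i := by
      funext ω; simp [hXdef]
    rwa [he] at h
  have hX0 : ∀ i, (∫ ω, X i ω ∂P) = 0 := by
    intro i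
    have hv : (∫ ω, v i ω ∂P) = μ := ((hident i).integral_eq).trans hmean
    simp only [hXdef]
    rw [integral_sub (hvint i) (integrable_const μ), hv, integral_const]
    simp
  -- moments
  obtain ⟨m2, hm2def⟩ : ∃ r : ℝ, r = ∫ ω, ‖X 0 ω‖^2 ∂P := ⟨_, rfl⟩
  obtain ⟨m3, hm3def⟩ : ∃ r : ℝ, r = ∫ ω, ‖X 0 ω‖^3 ∂P := ⟨_, rfl⟩
  have hm2nn : 0 ≤ m2 := hm2def ▸ integral_nonneg (fun ω => by positivity)
  have hm3nn : 0 ≤ m3 := hm3def ▸ integral_nonneg (fun ω => by positivity)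
  have hmomid : ∀ i (n : ℕ), (∫ ω, ‖X i ω‖^n ∂P) = ∫ ω, ‖X 0 ω‖^n ∂P := by
    intro i n
    exact ((hXid i).comp (measurable_norm.pow_const n)).integral_eq
  -- partial sums
  set Sf : ℕ → Ω → EuclideanSpace ℝ (Fin d) := fun k ω => ∑ i ∈ Finset.range k, X i ω with hSfdef
  have hSmeas : ∀ k, Measurable (Sf k) := by
    intro k
    exact Finset.measurable_sum _ (fun i _ => hXmeas i)
  have hSL3 : ∀ k, MemLp (Sf k) 3 P :=
    fun k => memLp_finsetSum _ (fun i _ => hXL3 i)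
  have hSint : ∀ k, Integrable (Sf k) P := fun k => (hSL3 k).integrable (by norm_num)
  have iS1 : ∀ k, Integrable (fun ω => ‖Sf k ω‖) P := fun k => (hSint k).norm
  have iS2 : ∀ k, Integrable (fun ω => ‖Sf k ω‖^2) P :=
    fun k => ((hSL3 k).mono_exponent (by norm_num)).norm.integrable_sq
  have iS3 : ∀ k, Integrable (fun ω => ‖Sf k ω‖^3) P := fun k => integrable_norm_cube (hSL3 k)
  have hindepSk : ∀ k, IndepFun (Sf k) (X k) P := by
    intro k
    have h := hXindep.indepFun_sum_range_succ hXmeas k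
    have he : (∑ j ∈ Finset.range k, X j) = Sf k := by
      funext ω; simp [hSfdef]
    rwa [he] at h
  have hsucc : ∀ k ω, Sf (k+1) ω = Sf k ω + X k ω := by
    intro k ω
    simp only [hSfdef]
    rw [Finset.sum_range_succ]
  -- integrability of the norm-weighted vector
  have hnormsmul : ∀ k, Integrable (fun ω => ‖Sf k ω‖ • Sf k ω) P := by
    intro k
    refine Integrable.mono' (iS2 k)
      ((measurable_norm.comp (hSmeas k)).smul (hSmeas k)).aestronglyMeasurable ?_
    filter_upwards with ω
    rw [norm_smul]
    simp [sq]
  -- inner product terms are zero in expectation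
  have hinner0 : ∀ k, (∫ ω, ⟪Sf k ω, X k ω⟫ ∂P) = 0 := by
    intro k
    have h := integral_weighted_inner_eq_zero P (hXmeas k) (hindepSk k)
      (measurable_const : Measurable (fun _ : EuclideanSpace ℝ (Fin d) => (1:ℝ)))
      (by simpa using hSint k) (hXint k) (hX0 k)
    simpa using h
  have hwinner0 : ∀ k, (∫ ω, ‖Sf k ω‖ * ⟪Sf k ω, X k ω⟫ ∂P) = 0 := by
    intro k
    exact integral_weighted_inner_eq_zero P (hXmeas k) (hindepSk k)
      measurable_norm (hnormsmul k) (hXint k) (hX0 k)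
  -- integrability of inner terms
  have iInner : ∀ k, Integrable (fun ω => ⟪Sf k ω, X k ω⟫) P := by
    intro k
    have hprod : Integrable (fun ω => ‖Sf k ω‖ * ‖X k ω‖) P :=
      IndepFun.integrable_mul ((hindepSk k).comp measurable_norm measurable_norm)
        (iS1 k) (hX1 k)
    refine Integrable.mono' hprod ((hSmeas k).inner (hXmeas k)).aestronglyMeasurable ?_
    filter_upwards with ω
    rw [Real.norm_eq_abs]
    exact abs_real_inner_le_norm _ _
  have iWInner : ∀ k, Integrable (fun ω => ‖Sf k ω‖ * ⟪Sf k ω, X k ω⟫) P := by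
    intro k
    have hprod : Integrable (fun ω => ‖Sf k ω‖^2 * ‖X k ω‖) P :=
      IndepFun.integrable_mul ((hindepSk k).comp (measurable_norm.pow_const 2) measurable_norm)
        (iS2 k) (hX1 k)
    refine Integrable.mono' hprod
      (((measurable_norm.comp (hSmeas k)).mul ((hSmeas k).inner (hXmeas k)))).aestronglyMeasurable ?_
    filter_upwards with ω
    rw [Real.norm_eq_abs, abs_mul, abs_of_nonneg (norm_nonneg _), sq, mul_assoc]
    exact mul_le_mul_of_nonneg_left (abs_real_inner_le_norm _ _) (norm_nonneg _)
  have iSX2 : ∀ k, Integrable (fun ω => ‖Sf k ω‖ * ‖X k ω‖^2) P := by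
    intro k
    exact IndepFun.integrable_mul ((hindepSk k).comp measurable_norm (measurable_norm.pow_const 2))
      (iS1 k) (hX2 k)
  -- second moment identity
  have hm2k : ∀ k, (∫ ω, ‖Sf k ω‖^2 ∂P) = k * m2 := by
    intro k
    induction k with
    | zero => simp [hSfdef]
    | succ k ih =>
      have hpt : ∀ ω, ‖Sf (k+1) ω‖^2 = ‖Sf k ω‖^2 + 2*⟪Sf k ω, X k ω⟫ + ‖X k ω‖^2 := by
        intro ω
        rw [hsucc k ω, @norm_add_sq_real]
      have i12 : Integrable (fun ω => ‖Sf k ω‖^2 + 2*⟪Sf k ω, X k ω⟫) P :=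
        (iS2 k).add ((iInner k).const_mul 2)
      calc (∫ ω, ‖Sf (k+1) ω‖^2 ∂P)
          = ∫ ω, (‖Sf k ω‖^2 + 2*⟪Sf k ω, X k ω⟫ + ‖X k ω‖^2) ∂P :=
            integral_congr_ae (Filter.Eventually.of_forall hpt)
        _ = (∫ ω, (‖Sf k ω‖^2 + 2*⟪Sf k ω, X k ω⟫) ∂P) + (∫ ω, ‖X k ω‖^2 ∂P) :=
            integral_add i12 (hX2 k)
        _ = (∫ ω, ‖Sf k ω‖^2 ∂P) + (∫ ω, 2*⟪Sf k ω, X k ω⟫ ∂P) + (∫ ω, ‖X k ω‖^2 ∂P) := by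
            rw [integral_add (iS2 k) ((iInner k).const_mul 2)]
        _ = k * m2 + 0 + m2 := by
            rw [ih, integral_const_mul _ _, hinner0 k, hmomid k 2, ← hm2def, mul_zero]
        _ = ((k+1 : ℕ) : ℝ) * m2 := by push_cast; ring
  -- Cauchy–Schwarz : E‖S_k‖ ≤ √(k m2)
  have hS1le : ∀ k : ℕ, (∫ ω, ‖Sf k ω‖ ∂P) ≤ Real.sqrt (k * m2) := by
    intro k
    set I : ℝ := ∫ ω, ‖Sf k ω‖ ∂P with hIdef
    have hI0 : 0 ≤ I := integral_nonneg (fun ω => norm_nonneg _)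
    have hvar : 0 ≤ ∫ ω, (‖Sf k ω‖ - I)^2 ∂P := integral_nonneg (fun ω => sq_nonneg _)
    have hexp : (∫ ω, (‖Sf k ω‖ - I)^2 ∂P) = (k * m2) - I^2 := by
      have hpt : ∀ ω, (‖Sf k ω‖ - I)^2 = (‖Sf k ω‖^2 - (2*I)*‖Sf k ω‖) + I^2 := by
        intro ω; ring
      have isub : Integrable (fun ω => ‖Sf k ω‖^2 - (2*I)*‖Sf k ω‖) P :=
        (iS2 k).sub ((iS1 k).const_mul (2*I))
      rw [integral_congr_ae (Filter.Eventually.of_forall hpt),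
        integral_add isub (integrable_const _),
        integral_sub (iS2 k) ((iS1 k).const_mul (2*I)), integral_const_mul _ _, hm2k k,
        integral_const, ← hIdef]
      simp
      ring
    have hsq : I^2 ≤ k * m2 := by linarith
    calc I = Real.sqrt (I^2) := (Real.sqrt_sq hI0).symm
      _ ≤ Real.sqrt (k * m2) := Real.sqrt_le_sqrt hsq
  -- third moment recursion
  have hrec : ∀ k : ℕ, (∫ ω, ‖Sf (k+1) ω‖^3 ∂P)
      ≤ (∫ ω, ‖Sf k ω‖^3 ∂P) + 3*(∫ ω, ‖Sf k ω‖ ∂P)*m2 + 3*m3 := by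
    intro k
    have hpt : ∀ ω, ‖Sf (k+1) ω‖^3 ≤ ‖Sf k ω‖^3 + 3*(‖Sf k ω‖*⟪Sf k ω, X k ω⟫)
        + 3*(‖Sf k ω‖*‖X k ω‖^2) + 3*‖X k ω‖^3 := by
      intro ω
      have h := norm_add_cube (Sf k ω) (X k ω)
      rw [hsucc k ω]
      linarith
    have iB : Integrable (fun ω => 3*(‖Sf k ω‖*⟪Sf k ω, X k ω⟫)) P := (iWInner k).const_mul 3
    have iC : Integrable (fun ω => 3*(‖Sf k ω‖*‖X k ω‖^2)) P := (iSX2 k).const_mul 3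
    have iD : Integrable (fun ω => 3*‖X k ω‖^3) P := (hX3 k).const_mul 3
    have iAB : Integrable (fun ω => ‖Sf k ω‖^3 + 3*(‖Sf k ω‖*⟪Sf k ω, X k ω⟫)) P := (iS3 k).add iB
    have iABC : Integrable (fun ω => ‖Sf k ω‖^3 + 3*(‖Sf k ω‖*⟪Sf k ω, X k ω⟫)
        + 3*(‖Sf k ω‖*‖X k ω‖^2)) P := iAB.add iC
    calc (∫ ω, ‖Sf (k+1) ω‖^3 ∂P)
        ≤ ∫ ω, (‖Sf k ω‖^3 + 3*(‖Sf k ω‖*⟪Sf k ω, X k ω⟫)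
            + 3*(‖Sf k ω‖*‖X k ω‖^2) + 3*‖X k ω‖^3) ∂P :=
          integral_mono (iS3 (k+1)) (iABC.add iD) hpt
      _ = (∫ ω, ‖Sf k ω‖^3 ∂P) + 3*(∫ ω, ‖Sf k ω‖ * ⟪Sf k ω, X k ω⟫ ∂P)
            + 3*(∫ ω, ‖Sf k ω‖ * ‖X k ω‖^2 ∂P) + 3*(∫ ω, ‖X k ω‖^3 ∂P) := by
          rw [integral_add iABC iD, integral_add iAB iC, integral_add (iS3 k) iB,
            integral_const_mul _ _, integral_const_mul _ _, integral_const_mul _ _]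
      _ = (∫ ω, ‖Sf k ω‖^3 ∂P) + 3*(∫ ω, ‖Sf k ω‖ ∂P)*m2 + 3*m3 := by
          rw [hwinner0 k, hmomid k 3, ← hm3def]
          have e4 : (∫ ω, ‖Sf k ω‖ * ‖X k ω‖^2 ∂P)
              = (∫ ω, ‖Sf k ω‖ ∂P) * (∫ ω, ‖X k ω‖^2 ∂P) :=
            IndepFun.integral_fun_mul_eq_mul_integral ((hindepSk k).comp measurable_norm (measurable_norm.pow_const 2))
              (iS1 k).aestronglyMeasurable (hX2 k).aestronglyMeasurable
          rw [e4, hmomid k 2, ← hm2def]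
          ring
  -- global bound by induction
  obtain ⟨K, hKdef⟩ : ∃ r : ℝ, r = 3*Real.sqrt m2 * m2 + 3*m3 := ⟨_, rfl⟩
  have hKnn : 0 ≤ K := by rw [hKdef]; positivity
  have hA : ∀ k : ℕ, (∫ ω, ‖Sf k ω‖^3 ∂P) ≤ K * k * Real.sqrt k := by
    intro k
    induction k with
    | zero => simp [hSfdef]
    | succ k ih =>
      have hk0 : (0:ℝ) ≤ (k:ℕ) := Nat.cast_nonneg k
      have h1 : (∫ ω, ‖Sf k ω‖ ∂P) * m2 ≤ Real.sqrt k * Real.sqrt m2 * m2 := by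
        have h := hS1le k
        rw [Real.sqrt_mul hk0] at h
        exact mul_le_mul_of_nonneg_right h hm2nn
      have hsk : Real.sqrt k ≤ Real.sqrt ((k:ℕ)+1) := Real.sqrt_le_sqrt (by linarith)
      have hsk1 : (1:ℝ) ≤ Real.sqrt ((k:ℕ)+1) := by
        have h := Real.sqrt_le_sqrt (show (1:ℝ) ≤ (k:ℕ)+1 by linarith [hk0])
        simpa using h
      have hsknn : (0:ℝ) ≤ Real.sqrt ((k:ℕ)+1) := Real.sqrt_nonneg _
      calc (∫ ω, ‖Sf (k+1) ω‖^3 ∂P)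
          ≤ (∫ ω, ‖Sf k ω‖^3 ∂P) + 3*(∫ ω, ‖Sf k ω‖ ∂P)*m2 + 3*m3 := hrec k
        _ ≤ K * k * Real.sqrt k + 3*(Real.sqrt k * Real.sqrt m2 * m2) + 3*m3 := by
            nlinarith [h1]
        _ ≤ K * k * Real.sqrt ((k:ℕ)+1) + (3*Real.sqrt m2 * m2) * Real.sqrt ((k:ℕ)+1)
              + 3*m3 * Real.sqrt ((k:ℕ)+1) := by
            have t1 : K * k * Real.sqrt k ≤ K * k * Real.sqrt ((k:ℕ)+1) :=
              mul_le_mul_of_nonneg_left hsk (mul_nonneg hKnn (Nat.cast_nonneg k))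
            have t2 : 3*(Real.sqrt k * Real.sqrt m2 * m2)
                ≤ (3*Real.sqrt m2 * m2) * Real.sqrt ((k:ℕ)+1) := by
              nlinarith [mul_le_mul_of_nonneg_right hsk (mul_nonneg (Real.sqrt_nonneg m2) hm2nn)]
            have t3 : 3*m3 ≤ 3*m3 * Real.sqrt ((k:ℕ)+1) := by nlinarith
            linarith
        _ = K * (((k+1:ℕ)):ℝ) * Real.sqrt (((k+1:ℕ)):ℝ) := by rw [hKdef]; push_cast; ring
      -- coercion note: `(↑(k+1) : ℝ) = ↑k + 1`
  -- conclusion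
  refine ⟨c^3 * K, fun k hk => ?_⟩
  have hkpos : (0:ℝ) < k := by exact_mod_cast hk
  have hepspt : ∀ ω, ‖eps c v μ k ω‖^3 = (c/k)^3 * ‖Sf k ω‖^3 := by
    intro ω
    have he : eps c v μ k ω = (c/(k:ℝ)) • Sf k ω := by
      simp only [eps, hSfdef, hXdef]
    rw [he, norm_smul, Real.norm_eq_abs, abs_of_nonneg (by positivity : (0:ℝ) ≤ c/(k:ℝ)), mul_pow]
  have hsplit : (∫ ω, ‖eps c v μ k ω‖^3 ∂P) = (c/k)^3 * ∫ ω, ‖Sf k ω‖^3 ∂P := by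
    rw [← integral_const_mul _ _]
    exact integral_congr_ae (Filter.Eventually.of_forall hepspt)
  rw [hsplit]
  have hbound : (c/k)^3 * (∫ ω, ‖Sf k ω‖^3 ∂P) ≤ (c/k)^3 * (K * k * Real.sqrt k) :=
    mul_le_mul_of_nonneg_left (hA k) (by positivity)
  refine hbound.trans (le_of_eq ?_)
  have hrpow : (k:ℝ) ^ (-(3/2) : ℝ) = Real.sqrt k * ((k:ℝ)^2)⁻¹ := by
    rw [show (-(3/2) : ℝ) = 1/2 + (-2 : ℝ) by norm_num, Real.rpow_add hkpos,
      ← Real.sqrt_eq_rpow, show ((-2:ℝ)) = ((-2 : ℤ) : ℝ) by norm_num, Real.rpow_intCast]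
    norm_num
  rw [hrpow]
  field_simp
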